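/- arXiv:0811.2476 — 3 statements merged into one kernel-verified Lean document; each statement's English description precedes it below -/
import Mathlib

section
/- Let J be a natural number and a, b : {0,...,J} → ℝ be the coefficients of a linear multistep method, and define the error coefficients C_0 = ∑_{j=0}^J a_j, C_1 = ∑_{j=0}^J j·a_j, and for q ≥ 2, C_q = (1/q!)·∑_{j=0}^J j^q·a_j − (1/(q−2)!)·∑_{j=0}^J j^{q−2}·b_j (with the convention 0^0 = 1). If the method is symmetric, i.e. a_j = a_{J−j} and b_j = b_{J−j} for all 0 ≤ j ≤ J, and if C_i = 0 for every i with 0 ≤ i ≤ 2m, then C_{2m+1} = 0. (Hence a symmetric linear multistep method always has even algebraic order.) -/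
/-!
Encode the method as the linear functional `L p = ∑ a_j p(j) - ∑ b_j p''(j)` on polynomials, so
that `C_q = L(X^q) / q!`. Symmetry of the coefficients makes `L` invariant under the reflection
`t ↦ J - t`, so `L` kills every polynomial that is odd about `J / 2`, in particular
`(X - J/2)^(2m+1)`. This polynomial differs from `X^(2m+1)` by a polynomial of degree at most `2m`,
on which `L` vanishes by the order conditions; hence `L(X^(2m+1)) = 0`.
-/

open Finset Polynomial

theorem Polynomial.linearMap_apply_eq_zero_of_natDegree_le {R M : Type*} [CommSemiring R]
    [AddCommMonoid M] [Module R M] (L : R[X] →ₗ[R] M) {n : ℕ} (hL : ∀ i ≤ n, L (X ^ i) = 0)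
    {p : R[X]} (hp : p.natDegree ≤ n) : L p = 0 := by
  rw [p.as_sum_range' (n + 1) (Nat.lt_succ_of_le hp), map_sum]
  refine sum_eq_zero fun i hi => ?_
  rw [← C_mul_X_pow_eq_monomial, ← smul_eq_C_mul, map_smul,
    hL i (Nat.lt_succ_iff.mp (mem_range.mp hi)), smul_zero]

noncomputable def lmmOperator {R : Type*} [CommRing R] (J : ℕ) (a b : ℕ → R) :
    R[X] →ₗ[R] R where
  toFun p := ∑ j ∈ range (J + 1), (a j * p.eval (j : R) - b j * (derivative^[2] p).eval (j : R))
  map_add' p q := by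
    simp only [← Module.End.pow_apply, map_add, eval_add, ← sum_add_distrib]
    exact sum_congr rfl fun _ _ => by ring
  map_smul' c p := by
    simp only [iterate_derivative_smul, eval_smul, smul_eq_mul, RingHom.id_apply, mul_sum]
    exact sum_congr rfl fun _ _ => by ring

section CommRing

variable {R : Type*} [CommRing R] {J : ℕ} {a b : ℕ → R}

theorem lmmOperator_apply (p : R[X]) : lmmOperator J a b p =
    ∑ j ∈ range (J + 1), (a j * p.eval (j : R) - b j * (derivative^[2] p).eval (j : R)) := rfl

theorem lmmOperator_X_pow (q : ℕ) : lmmOperator J a b (X ^ q) =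
    ∑ j ∈ range (J + 1), (j : R) ^ q * a j
      - (q.descFactorial 2 : R) * ∑ j ∈ range (J + 1), (j : R) ^ (q - 2) * b j := by
  simp only [lmmOperator_apply, iterate_derivative_X_pow_eq_C_mul, eval_mul, eval_C, eval_pow,
    eval_X, sum_sub_distrib, mul_sum]
  congr 1 <;> exact sum_congr rfl fun _ _ => by ring

theorem sum_range_mul_reflect {c : ℕ → R} (hc : ∀ j ≤ J, c j = c (J - j)) (f : R → R) :
    ∑ j ∈ range (J + 1), c j * f (J - j) = ∑ j ∈ range (J + 1), c j * f j := by
  rw [← sum_range_reflect]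
  refine sum_congr rfl fun j hj => ?_
  have hjJ : j ≤ J := Nat.lt_succ_iff.mp (mem_range.mp hj)
  rw [Nat.add_sub_cancel, Nat.cast_sub hjJ, sub_sub_cancel, ← hc j hjJ]

theorem lmmOperator_comp_reflect (ha : ∀ j ≤ J, a j = a (J - j))
    (hb : ∀ j ≤ J, b j = b (J - j)) (p : R[X]) :
    lmmOperator J a b (p.comp (C (J : R) - X)) = lmmOperator J a b p := by
  have hder : derivative^[2] (p.comp (C (J : R) - X)) =
      (derivative^[2] p).comp (C (J : R) - X) := by
    simp [derivative_comp]
  simp only [lmmOperator_apply, hder, eval_comp, eval_sub, eval_C, eval_X, sum_sub_distrib]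
  rw [sum_range_mul_reflect ha (eval · p), sum_range_mul_reflect hb (eval · (derivative^[2] p))]

end CommRing

section Field

variable {K : Type*} [Field K] [CharZero K] {J : ℕ} {a b : ℕ → K}

theorem lmmOperator_X_sub_half_pow_of_odd (ha : ∀ j ≤ J, a j = a (J - j))
    (hb : ∀ j ≤ J, b j = b (J - j)) {n : ℕ} (hn : Odd n) :
    lmmOperator J a b ((X - C ((J : K) / 2)) ^ n) = 0 := by
  have hrefl : C (J : K) - X - C ((J : K) / 2) = -(X - C ((J : K) / 2)) := by
    rw [sub_right_comm, ← C_sub, sub_half, neg_sub]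
  have h := lmmOperator_comp_reflect ha hb ((X - C ((J : K) / 2)) ^ n)
  rw [pow_comp, sub_comp, X_comp, C_comp, hrefl, hn.neg_pow, map_neg] at h
  exact self_eq_neg.mp h.symm

theorem lmmOperator_X_pow_odd_eq_zero (ha : ∀ j ≤ J, a j = a (J - j))
    (hb : ∀ j ≤ J, b j = b (J - j)) {m : ℕ}
    (hL : ∀ i ≤ 2 * m, lmmOperator J a b (X ^ i) = 0) :
    lmmOperator J a b (X ^ (2 * m + 1)) = 0 := by
  have hmonic : IsMonicOfDegree ((X - C ((J : K) / 2)) ^ (2 * m + 1)) (2 * m + 1) := by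
    simpa using (isMonicOfDegree_X_sub_one _).pow (2 * m + 1)
  have hdeg : ((X - C ((J : K) / 2)) ^ (2 * m + 1) - X ^ (2 * m + 1)).natDegree ≤ 2 * m :=
    Nat.le_of_lt_succ (hmonic.natDegree_sub_X_pow (by omega))
  have h := linearMap_apply_eq_zero_of_natDegree_le _ hL hdeg
  rwa [map_sub, lmmOperator_X_sub_half_pow_of_odd ha hb (odd_two_mul_add_one m), zero_sub,
    neg_eq_zero] at h

end Field

/-- A symmetric linear multistep method has even algebraic order: if the error
coefficients `C_0, ..., C_{2m}` all vanish, then so does `C_{2m+1}`. -/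
theorem symmetric_lmm_even_order (J m : ℕ) (a b : ℕ → ℝ)
    (hsym_a : ∀ j ≤ J, a j = a (J - j))
    (hsym_b : ∀ j ≤ J, b j = b (J - j))
    (C : ℕ → ℝ)
    (hC0 : C 0 = ∑ j ∈ range (J + 1), a j)
    (hC1 : C 1 = ∑ j ∈ range (J + 1), (j : ℝ) * a j)
    (hCq : ∀ q : ℕ, 2 ≤ q →
      C q = (1 / (Nat.factorial q : ℝ)) * ∑ j ∈ range (J + 1), (j : ℝ) ^ q * a j
          - (1 / (Nat.factorial (q - 2) : ℝ)) * ∑ j ∈ range (J + 1), (j : ℝ) ^ (q - 2) * b j)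
    (hvanish : ∀ i ≤ 2 * m, C i = 0) :
    C (2 * m + 1) = 0 := by
  have hL : ∀ q, lmmOperator J a b (X ^ q) = q.factorial * C q := by
    intro q
    rw [lmmOperator_X_pow]
    match q with
    | 0 => simp [hC0]
    | 1 => simp [hC1]
    | q + 2 =>
      rw [hCq _ le_add_self, ← Nat.factorial_mul_descFactorial (le_add_self : 2 ≤ q + 2)]
      simp only [Nat.add_sub_cancel, Nat.cast_mul]
      field_simp
  have hodd := lmmOperator_X_pow_odd_eq_zero hsym_a hsym_b fun i hi => by
    rw [hL, hvanish i hi, mul_zero]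
  rw [hL] at hodd
  exact (mul_eq_zero.mp hodd).resolve_left (by positivity)
end

section
/- Let y : ℝ → ℝ be infinitely differentiable and let t ∈ ℝ. Then for the Quinlan–Tremaine 12-step method, the local truncation functional satisfies lim_{h→0} (1/h^14)·[∑_{j=0}^{12} a_j·y(t + j·h) − h²·∑_{j=0}^{12} b_j·y''(t + j·h)] = (16301796103/290594304000)·y^(14)(t), where y^(14) denotes the 14th derivative of y. -/
open Finset Filter



/-- The `a`-coefficients of the Quinlan–Tremaine 12-step method. -/
def qtA : ℕ → ℝ
  | 0 => 1
  | 1 => -2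
  | 2 => 2
  | 3 => -1
  | 9 => -1
  | 10 => 2
  | 11 => -2
  | 12 => 1
  | _ => 0

/-- The `b`-coefficients of the Quinlan–Tremaine 12-step method. -/
noncomputable def qtB : ℕ → ℝ
  | 1 => 90987349 / 53222400
  | 2 => -114798419 / 26611200
  | 3 => 270875723 / 17740800
  | 4 => -67855831 / 2217600
  | 5 => 50277247 / 985600
  | 6 => -253491379 / 4435200
  | 7 => 50277247 / 985600
  | 8 => -67855831 / 2217600
  | 9 => 270875723 / 17740800
  | 10 => -114798419 / 26611200
  | 11 => 90987349 / 53222400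
  | _ => 0

open scoped ContDiff Topology

namespace QTPLTE

lemma qtA0 : qtA 0 = 1 := rfl
lemma qtA1 : qtA 1 = -2 := rfl
lemma qtA2 : qtA 2 = 2 := rfl
lemma qtA3 : qtA 3 = -1 := rfl
lemma qtA4 : qtA 4 = 0 := rfl
lemma qtA5 : qtA 5 = 0 := rfl
lemma qtA6 : qtA 6 = 0 := rfl
lemma qtA7 : qtA 7 = 0 := rfl
lemma qtA8 : qtA 8 = 0 := rfl
lemma qtA9 : qtA 9 = -1 := rfl
lemma qtA10 : qtA 10 = 2 := rfl
lemma qtA11 : qtA 11 = -2 := rfl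
lemma qtA12 : qtA 12 = 1 := rfl

lemma qtB0 : qtB 0 = 0 := rfl
lemma qtB1 : qtB 1 = 90987349 / 53222400 := rfl
lemma qtB2 : qtB 2 = -114798419 / 26611200 := rfl
lemma qtB3 : qtB 3 = 270875723 / 17740800 := rfl
lemma qtB4 : qtB 4 = -67855831 / 2217600 := rfl
lemma qtB5 : qtB 5 = 50277247 / 985600 := rfl
lemma qtB6 : qtB 6 = -253491379 / 4435200 := rfl
lemma qtB7 : qtB 7 = 50277247 / 985600 := rfl
lemma qtB8 : qtB 8 = -67855831 / 2217600 := rfl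
lemma qtB9 : qtB 9 = 270875723 / 17740800 := rfl
lemma qtB10 : qtB 10 = -114798419 / 26611200 := rfl
lemma qtB11 : qtB 11 = 90987349 / 53222400 := rfl
lemma qtB12 : qtB 12 = 0 := rfl

lemma smooth_iter {f : ℝ → ℝ} (hf : ContDiff ℝ ∞ f) (n : ℕ) : ContDiff ℝ ∞ (iteratedDeriv n f) := by
  rw [iteratedDeriv_eq_iterate]; exact hf.iterate_deriv n

lemma hasDerivAt_iter {f : ℝ → ℝ} (hf : ContDiff ℝ ∞ f) (n : ℕ) (x : ℝ) :
    HasDerivAt (iteratedDeriv n f) (iteratedDeriv (n+1) f x) x := by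
  rw [iteratedDeriv_succ]
  exact (((smooth_iter hf n).differentiable (by simp)) x).hasDerivAt

lemma iter_affine {f : ℝ → ℝ} (hf : ContDiff ℝ ∞ f) (t c : ℝ) (n : ℕ) (x : ℝ) :
    iteratedDeriv n (fun h => f (t + c * h)) x = c ^ n * iteratedDeriv n f (t + c * x) := by
  have hshift : ContDiff ℝ (n : ℕ) (fun z : ℝ => f (t + z)) :=
    (hf.of_le (by exact_mod_cast le_top)).comp (contDiff_const.add contDiff_id)
  have h1 : (fun h : ℝ => f (t + c * h)) = fun h => (fun z : ℝ => f (t + z)) (c * h) := rfl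
  rw [h1, iteratedDeriv_comp_const_mul hshift c, iteratedDeriv_comp_const_add]

lemma iter_sub {n : ℕ} {f g : ℝ → ℝ} (hf : ContDiff ℝ ∞ f) (hg : ContDiff ℝ ∞ g) (x : ℝ) :
    iteratedDeriv n (fun z => f z - g z) x = iteratedDeriv n f x - iteratedDeriv n g x := by
  simp only [← iteratedDerivWithin_univ]
  exact iteratedDerivWithin_sub (Set.mem_univ x) uniqueDiffOn_univ
    ((hf.of_le (by exact_mod_cast le_top)).contDiffWithinAt)
    ((hg.of_le (by exact_mod_cast le_top)).contDiffWithinAt)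

lemma iter_add {n : ℕ} {f g : ℝ → ℝ} (hf : ContDiff ℝ ∞ f) (hg : ContDiff ℝ ∞ g) (x : ℝ) :
    iteratedDeriv n (fun z => f z + g z) x = iteratedDeriv n f x + iteratedDeriv n g x := by
  simp only [← iteratedDerivWithin_univ]
  exact iteratedDerivWithin_add (Set.mem_univ x) uniqueDiffOn_univ
    ((hf.of_le (by exact_mod_cast le_top)).contDiffWithinAt)
    ((hg.of_le (by exact_mod_cast le_top)).contDiffWithinAt)

lemma iter_cmul {n : ℕ} {f : ℝ → ℝ} (hf : ContDiff ℝ ∞ f) (c : ℝ) (x : ℝ) :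
    iteratedDeriv n (fun z => c * f z) x = c * iteratedDeriv n f x := by
  simp only [← iteratedDerivWithin_univ]
  exact iteratedDerivWithin_const_mul (Set.mem_univ x) uniqueDiffOn_univ c
    ((hf.of_le (by exact_mod_cast le_top)).contDiffWithinAt)

lemma iter_zero_fun {n : ℕ} (x : ℝ) : iteratedDeriv n (fun _ : ℝ => (0:ℝ)) x = 0 := by
  have := iter_cmul (n := n) (f := fun _ : ℝ => (0:ℝ)) contDiff_const (0:ℝ) x
  simpa using this

lemma iter_sum {n : ℕ} {ι : Type*} (u : Finset ι) (F : ι → ℝ → ℝ)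
    (hF : ∀ i ∈ u, ContDiff ℝ ∞ (F i)) (x : ℝ) :
    iteratedDeriv n (fun z => ∑ i ∈ u, F i z) x = ∑ i ∈ u, iteratedDeriv n (F i) x := by
  induction u using Finset.cons_induction with
  | empty => simpa using iter_zero_fun (n := n) x
  | cons a s ha ih =>
    have h1 := iter_add (n := n) (f := F a) (g := fun z => ∑ i ∈ s, F i z)
      (hF a (Finset.mem_cons_self a s))
      (ContDiff.sum fun i hi => hF i (Finset.mem_cons_of_mem hi)) x
    simp only [Finset.sum_cons]
    rw [h1, ih fun i hi => hF i (Finset.mem_cons_of_mem hi)]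

lemma tendsto_div_pow (n : ℕ) : ∀ (g : ℝ → ℝ), ContDiff ℝ ∞ g →
    (∀ k, k ≤ n → iteratedDeriv k g 0 = 0) →
    Tendsto (fun h : ℝ => g h / h ^ (n+1)) (𝓝[≠] (0:ℝ))
      (𝓝 (iteratedDeriv (n+1) g 0 / (Nat.factorial (n+1) : ℝ))) := by
  induction n with
  | zero =>
    intro g hg h0
    have hg0 : g 0 = 0 := by simpa using h0 0 le_rfl
    have hd : HasDerivAt g (deriv g 0) 0 :=
      ((hg.differentiable (by simp)) 0).hasDerivAt
    rw [hasDerivAt_iff_tendsto_slope] at hd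
    have : iteratedDeriv 1 g 0 / (Nat.factorial 1 : ℝ) = deriv g 0 := by
      simp [iteratedDeriv_one]
    rw [show (0:ℕ)+1 = 1 from rfl, this]
    refine hd.congr (fun h => ?_)
    simp [slope, hg0, div_eq_inv_mul]
  | succ n ih =>
    intro g hg h0
    have hg' : ContDiff ℝ ∞ (deriv g) := (contDiff_infty_iff_deriv.mp hg).2
    have hdiv0 := ih (deriv g) hg' (fun k hk => by
      rw [← iteratedDeriv_succ']
      exact h0 (k+1) (by omega))
    have hiter : iteratedDeriv (n+1) (deriv g) 0 = iteratedDeriv (n+2) g 0 := by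
      rw [← iteratedDeriv_succ']
    have hdiv : Tendsto (fun x : ℝ => deriv g x / (((n:ℝ)+2) * x ^ (n+1))) (𝓝[≠] (0:ℝ))
        (𝓝 (iteratedDeriv (n+2) g 0 / (Nat.factorial (n+2) : ℝ))) := by
      have h2 := (hdiv0.div_const ((n:ℝ)+2))
      rw [hiter] at h2
      have hfe : ∀ x : ℝ, deriv g x / x ^ (n+1) / ((n:ℝ)+2)
          = deriv g x / (((n:ℝ)+2) * x ^ (n+1)) := fun x => by
        rw [div_div, mul_comm]
      have hce : iteratedDeriv (n+2) g 0 / (Nat.factorial (n+1) : ℝ) / ((n:ℝ)+2)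
          = iteratedDeriv (n+2) g 0 / (Nat.factorial (n+2) : ℝ) := by
        rw [div_div, show Nat.factorial (n+2) = (n+2) * Nat.factorial (n+1) from rfl]
        push_cast
        ring_nf
      rw [hce] at h2
      exact h2.congr hfe
    exact HasDerivAt.lhopital_zero_nhdsNE
      (f := g) (f' := deriv g) (g := fun h : ℝ => h ^ (n+2))
      (g' := fun h : ℝ => ((n:ℝ)+2) * h ^ (n+1))
      (Eventually.of_forall fun x => ((hg.differentiable (by simp)) x).hasDerivAt)
      (Eventually.of_forall fun x => by simpa using hasDerivAt_pow (n+2) x)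
      (eventually_mem_nhdsWithin.mono fun x hx => by
        have hx' : x ≠ 0 := hx
        positivity)
      (by
        have h3 : Tendsto g (𝓝 (0:ℝ)) (𝓝 (g 0)) := (hg.continuous).tendsto 0
        rw [show g 0 = 0 from by simpa using h0 0 (by omega)] at h3
        exact h3.mono_left nhdsWithin_le_nhds)
      (by
        have h3 : Tendsto (fun h : ℝ => h ^ (n+2)) (𝓝 (0:ℝ)) (𝓝 ((0:ℝ) ^ (n+2))) :=
          (continuous_pow (n+2)).tendsto 0
        rw [zero_pow (by omega)] at h3
        exact h3.mono_left nhdsWithin_le_nhds)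
      hdiv

lemma iter_sq_mul {f : ℝ → ℝ} (hf : ContDiff ℝ ∞ f) (n : ℕ) :
    iteratedDeriv (n+2) (fun h : ℝ => h ^ 2 * f h) = fun x =>
      x ^ 2 * iteratedDeriv (n+2) f x + 2 * ((n:ℝ) + 2) * x * iteratedDeriv (n+1) f x
        + ((n:ℝ) + 2) * ((n:ℝ) + 1) * iteratedDeriv n f x := by
  have hdf : ∀ x : ℝ, HasDerivAt f (iteratedDeriv 1 f x) x := fun x => by
    simpa [iteratedDeriv_one] using hasDerivAt_iter hf 0 x
  induction n with
  | zero =>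
    have d1 : deriv (fun h : ℝ => h ^ 2 * f h)
        = fun x => 2 * x * f x + x ^ 2 * iteratedDeriv 1 f x := by
      funext x
      have h := ((hasDerivAt_pow 2 x).mul (hdf x)).deriv
      refine h.trans ?_; push_cast; ring
    funext x
    rw [show (0:ℕ)+2 = 1+1 from rfl, iteratedDeriv_succ,
      iteratedDeriv_one (f := fun h : ℝ => h ^ 2 * f h), d1]
    have hA : HasDerivAt (fun x : ℝ => 2 * x * f x)
        (2 * 1 * f x + 2 * x * iteratedDeriv 1 f x) x :=
      (((hasDerivAt_id x).const_mul (2:ℝ)).mul (hdf x))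
    have hB : HasDerivAt (fun x : ℝ => x ^ 2 * iteratedDeriv 1 f x)
        ((2:ℕ) * x ^ 1 * iteratedDeriv 1 f x + x ^ 2 * iteratedDeriv 2 f x) x :=
      ((hasDerivAt_pow 2 x).mul (hasDerivAt_iter hf 1 x))
    refine (hA.add hB).deriv.trans ?_
    simp only [iteratedDeriv_zero]
    push_cast; ring
  | succ n ih =>
    funext x
    rw [show n+1+2 = (n+2)+1 from rfl, iteratedDeriv_succ, ih]
    have hA : HasDerivAt (fun x : ℝ => x ^ 2 * iteratedDeriv (n+2) f x)
        ((2:ℕ) * x ^ 1 * iteratedDeriv (n+2) f x + x ^ 2 * iteratedDeriv (n+3) f x) x :=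
      ((hasDerivAt_pow 2 x).mul (hasDerivAt_iter hf (n+2) x))
    have hB : HasDerivAt (fun x : ℝ => 2 * ((n:ℝ) + 2) * x * iteratedDeriv (n+1) f x)
        ((2 * ((n:ℝ) + 2)) * 1 * iteratedDeriv (n+1) f x
          + (2 * ((n:ℝ) + 2)) * x * iteratedDeriv (n+2) f x) x :=
      (((hasDerivAt_id x).const_mul (2 * ((n:ℝ) + 2))).mul (hasDerivAt_iter hf (n+1) x))
    have hC : HasDerivAt (fun x : ℝ => ((n:ℝ) + 2) * ((n:ℝ) + 1) * iteratedDeriv n f x)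
        (((n:ℝ) + 2) * ((n:ℝ) + 1) * iteratedDeriv (n+1) f x) x :=
      ((hasDerivAt_iter hf n x).const_mul (((n:ℝ) + 2) * ((n:ℝ) + 1)))
    refine ((hA.add hB).add hC).deriv.trans ?_
    push_cast; ring

end QTPLTE

/-- The principal local truncation error of the Quinlan–Tremaine 12-step method:
the local truncation functional divided by `h^14` tends to
`(16301796103/290594304000) · y⁽¹⁴⁾(t)` as `h → 0`. -/
theorem quinlan_tremaine_plte (y : ℝ → ℝ) (hy : ContDiff ℝ (⊤ : ℕ∞) y) (t : ℝ) :
    Tendsto (fun h : ℝ =>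
        (1 / h ^ 14) * (∑ j ∈ range 13, qtA j * y (t + j * h)
          - h ^ 2 * ∑ j ∈ range 13, qtB j * iteratedDeriv 2 y (t + j * h)))
      (nhdsWithin 0 {0}ᶜ)
      (nhds ((16301796103 / 290594304000) * iteratedDeriv 14 y t)) := by
  classical
  open QTPLTE in
  have hy' : ContDiff ℝ ∞ y := hy.of_le (by simp)
  have hy2 : ContDiff ℝ ∞ (iteratedDeriv 2 y) := smooth_iter hy' 2
  set g : ℝ → ℝ := fun h => (∑ j ∈ range 13, qtA j * y (t + j * h))
      - h ^ 2 * ∑ j ∈ range 13, qtB j * iteratedDeriv 2 y (t + j * h) with hgdef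
  have haff : ∀ c : ℝ, ContDiff ℝ ∞ (fun h : ℝ => t + c * h) := fun c =>
    contDiff_const.add (contDiff_const.mul contDiff_id)
  have hA : ContDiff ℝ ∞ (fun h : ℝ => ∑ j ∈ range 13, qtA j * y (t + j * h)) :=
    ContDiff.sum fun j _ => contDiff_const.mul (hy'.comp (haff j))
  have hB : ContDiff ℝ ∞ (fun h : ℝ => ∑ j ∈ range 13, qtB j * iteratedDeriv 2 y (t + j * h)) :=
    ContDiff.sum fun j _ => contDiff_const.mul (hy2.comp (haff j))
  have hB2 : ContDiff ℝ ∞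
      (fun h : ℝ => h ^ 2 * ∑ j ∈ range 13, qtB j * iteratedDeriv 2 y (t + j * h)) :=
    (contDiff_id.pow 2).mul hB
  have hg : ContDiff ℝ ∞ g := hA.sub hB2
  -- iterated derivative of the `A` part
  have hy2iter : ∀ (k : ℕ) (x : ℝ), iteratedDeriv k (iteratedDeriv 2 y) x
      = iteratedDeriv (k+2) y x := by
    intro k x
    simp only [iteratedDeriv_eq_iterate]
    rw [← Function.iterate_add_apply]
  have hterm : ∀ (f : ℝ → ℝ), ContDiff ℝ ∞ f → ∀ (c : ℝ) (j : ℕ) (k : ℕ),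
      iteratedDeriv k (fun h : ℝ => c * f (t + (j:ℝ) * h)) 0
        = c * (j:ℝ) ^ k * iteratedDeriv k f t := by
    intro f hf c j k
    have h1 := iter_cmul (n := k) (f := fun h : ℝ => f (t + (j:ℝ) * h))
      (hf.comp (haff j)) c 0
    beta_reduce at h1
    rw [h1, iter_affine hf t _ k 0, mul_zero, add_zero]
    ring
  have hAk : ∀ k : ℕ, iteratedDeriv k (fun h : ℝ => ∑ j ∈ range 13, qtA j * y (t + j * h)) 0
      = (∑ j ∈ range 13, qtA j * (j:ℝ) ^ k) * iteratedDeriv k y t := by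
    intro k
    have h1 := iter_sum (n := k) (range 13) (fun j => fun h : ℝ => qtA j * y (t + (j:ℝ) * h))
      (fun j _ => contDiff_const.mul (hy'.comp (haff j))) 0
    beta_reduce at h1
    rw [h1, Finset.sum_congr rfl fun j _ => hterm y hy' (qtA j) j k, ← Finset.sum_mul]
  have hBk : ∀ k : ℕ, iteratedDeriv k
        (fun h : ℝ => ∑ j ∈ range 13, qtB j * iteratedDeriv 2 y (t + j * h)) 0
      = (∑ j ∈ range 13, qtB j * (j:ℝ) ^ k) * iteratedDeriv (k+2) y t := by
    intro k
    have h1 := iter_sum (n := k) (range 13)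
      (fun j => fun h : ℝ => qtB j * iteratedDeriv 2 y (t + (j:ℝ) * h))
      (fun j _ => contDiff_const.mul (hy2.comp (haff j))) 0
    beta_reduce at h1
    rw [h1, Finset.sum_congr rfl fun j _ => hterm _ hy2 (qtB j) j k, ← Finset.sum_mul, hy2iter]
  -- iterated derivatives of `g` at `0`
  have hGk : ∀ m : ℕ, iteratedDeriv (m+2) g 0
      = ((∑ j ∈ range 13, qtA j * (j:ℝ) ^ (m+2))
          - ((m:ℝ)+2) * ((m:ℝ)+1) * ∑ j ∈ range 13, qtB j * (j:ℝ) ^ m)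
        * iteratedDeriv (m+2) y t := by
    intro m
    have hsub := iter_sub (n := m+2)
      (f := fun h : ℝ => ∑ j ∈ range 13, qtA j * y (t + j * h))
      (g := fun h : ℝ => h ^ 2 * ∑ j ∈ range 13, qtB j * iteratedDeriv 2 y (t + j * h))
      hA hB2 0
    beta_reduce at hsub
    rw [hgdef, hsub, hAk (m+2)]
    have hsq := congrFun (iter_sq_mul hB m) 0
    rw [hsq, hBk m]
    norm_num
    ring
  have h0 : iteratedDeriv 0 g 0 = 0 := by
    rw [iteratedDeriv_zero, hgdef]
    norm_num [← Finset.sum_mul]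
    rw [show (∑ j ∈ range 13, qtA j) = 0 from by
      norm_num [Finset.sum_range_succ, qtA0, qtA1, qtA2, qtA3, qtA4, qtA5, qtA6, qtA7, qtA8,
        qtA9, qtA10, qtA11, qtA12]]
    simp
  have h1 : iteratedDeriv 1 g 0 = 0 := by
    have hsub := iter_sub (n := 1)
      (f := fun h : ℝ => ∑ j ∈ range 13, qtA j * y (t + j * h))
      (g := fun h : ℝ => h ^ 2 * ∑ j ∈ range 13, qtB j * iteratedDeriv 2 y (t + j * h))
      hA hB2 0
    beta_reduce at hsub
    rw [hgdef, hsub, hAk 1]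
    have hd : deriv (fun h : ℝ => h ^ 2
        * ∑ j ∈ range 13, qtB j * iteratedDeriv 2 y (t + j * h)) 0 = 0 := by
      have := ((hasDerivAt_pow 2 (0:ℝ)).mul
        ((hB.differentiable (by simp)) 0).hasDerivAt).deriv
      refine this.trans ?_
      norm_num
    rw [show (iteratedDeriv 1 (fun h : ℝ => h ^ 2
        * ∑ j ∈ range 13, qtB j * iteratedDeriv 2 y (t + j * h)) 0) = 0 from by
      rw [iteratedDeriv_one]; exact hd]
    rw [show (∑ j ∈ range 13, qtA j * (j:ℝ) ^ 1) = 0 from by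
      norm_num [Finset.sum_range_succ, qtA0, qtA1, qtA2, qtA3, qtA4, qtA5, qtA6, qtA7, qtA8,
        qtA9, qtA10, qtA11, qtA12]]
    simp
  have hvanish : ∀ k, k ≤ 13 → iteratedDeriv k g 0 = 0 := by
    intro k hk
    interval_cases k
    · exact h0
    · exact h1
    · have hval := hGk 0
      norm_num [Finset.sum_range_succ, qtA0, qtA1, qtA2, qtA3, qtA4, qtA5, qtA6, qtA7, qtA8, qtA9, qtA10, qtA11, qtA12, qtB0, qtB1, qtB2, qtB3, qtB4, qtB5, qtB6, qtB7, qtB8, qtB9, qtB10, qtB11, qtB12] at hval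
      exact hval
    · have hval := hGk 1
      norm_num [Finset.sum_range_succ, qtA0, qtA1, qtA2, qtA3, qtA4, qtA5, qtA6, qtA7, qtA8, qtA9, qtA10, qtA11, qtA12, qtB0, qtB1, qtB2, qtB3, qtB4, qtB5, qtB6, qtB7, qtB8, qtB9, qtB10, qtB11, qtB12] at hval
      exact hval
    · have hval := hGk 2
      norm_num [Finset.sum_range_succ, qtA0, qtA1, qtA2, qtA3, qtA4, qtA5, qtA6, qtA7, qtA8, qtA9, qtA10, qtA11, qtA12, qtB0, qtB1, qtB2, qtB3, qtB4, qtB5, qtB6, qtB7, qtB8, qtB9, qtB10, qtB11, qtB12] at hval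
      exact hval
    · have hval := hGk 3
      norm_num [Finset.sum_range_succ, qtA0, qtA1, qtA2, qtA3, qtA4, qtA5, qtA6, qtA7, qtA8, qtA9, qtA10, qtA11, qtA12, qtB0, qtB1, qtB2, qtB3, qtB4, qtB5, qtB6, qtB7, qtB8, qtB9, qtB10, qtB11, qtB12] at hval
      exact hval
    · have hval := hGk 4
      norm_num [Finset.sum_range_succ, qtA0, qtA1, qtA2, qtA3, qtA4, qtA5, qtA6, qtA7, qtA8, qtA9, qtA10, qtA11, qtA12, qtB0, qtB1, qtB2, qtB3, qtB4, qtB5, qtB6, qtB7, qtB8, qtB9, qtB10, qtB11, qtB12] at hval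
      exact hval
    · have hval := hGk 5
      norm_num [Finset.sum_range_succ, qtA0, qtA1, qtA2, qtA3, qtA4, qtA5, qtA6, qtA7, qtA8, qtA9, qtA10, qtA11, qtA12, qtB0, qtB1, qtB2, qtB3, qtB4, qtB5, qtB6, qtB7, qtB8, qtB9, qtB10, qtB11, qtB12] at hval
      exact hval
    · have hval := hGk 6
      norm_num [Finset.sum_range_succ, qtA0, qtA1, qtA2, qtA3, qtA4, qtA5, qtA6, qtA7, qtA8, qtA9, qtA10, qtA11, qtA12, qtB0, qtB1, qtB2, qtB3, qtB4, qtB5, qtB6, qtB7, qtB8, qtB9, qtB10, qtB11, qtB12] at hval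
      exact hval
    · have hval := hGk 7
      norm_num [Finset.sum_range_succ, qtA0, qtA1, qtA2, qtA3, qtA4, qtA5, qtA6, qtA7, qtA8, qtA9, qtA10, qtA11, qtA12, qtB0, qtB1, qtB2, qtB3, qtB4, qtB5, qtB6, qtB7, qtB8, qtB9, qtB10, qtB11, qtB12] at hval
      exact hval
    · have hval := hGk 8
      norm_num [Finset.sum_range_succ, qtA0, qtA1, qtA2, qtA3, qtA4, qtA5, qtA6, qtA7, qtA8, qtA9, qtA10, qtA11, qtA12, qtB0, qtB1, qtB2, qtB3, qtB4, qtB5, qtB6, qtB7, qtB8, qtB9, qtB10, qtB11, qtB12] at hval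
      exact hval
    · have hval := hGk 9
      norm_num [Finset.sum_range_succ, qtA0, qtA1, qtA2, qtA3, qtA4, qtA5, qtA6, qtA7, qtA8, qtA9, qtA10, qtA11, qtA12, qtB0, qtB1, qtB2, qtB3, qtB4, qtB5, qtB6, qtB7, qtB8, qtB9, qtB10, qtB11, qtB12] at hval
      exact hval
    · have hval := hGk 10
      norm_num [Finset.sum_range_succ, qtA0, qtA1, qtA2, qtA3, qtA4, qtA5, qtA6, qtA7, qtA8, qtA9, qtA10, qtA11, qtA12, qtB0, qtB1, qtB2, qtB3, qtB4, qtB5, qtB6, qtB7, qtB8, qtB9, qtB10, qtB11, qtB12] at hval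
      exact hval
    · have hval := hGk 11
      norm_num [Finset.sum_range_succ, qtA0, qtA1, qtA2, qtA3, qtA4, qtA5, qtA6, qtA7, qtA8, qtA9, qtA10, qtA11, qtA12, qtB0, qtB1, qtB2, qtB3, qtB4, qtB5, qtB6, qtB7, qtB8, qtB9, qtB10, qtB11, qtB12] at hval
      exact hval
  have main' := tendsto_div_pow 13 g hg hvanish
  have hC : iteratedDeriv (13+1) g 0 / (Nat.factorial (13+1) : ℝ)
      = 16301796103 / 290594304000 * iteratedDeriv 14 y t := by
    have hval := hGk 12
    norm_num [Finset.sum_range_succ, qtA0, qtA1, qtA2, qtA3, qtA4, qtA5, qtA6, qtA7, qtA8, qtA9, qtA10, qtA11, qtA12, qtB0, qtB1, qtB2, qtB3, qtB4, qtB5, qtB6, qtB7, qtB8, qtB9, qtB10, qtB11, qtB12] at hval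
    rw [show (13:ℕ)+1 = 14 from rfl, hval]
    rw [show ((Nat.factorial 14 : ℕ) : ℝ) = 87178291200 by norm_num [Nat.factorial]]
    ring_nf
  rw [hC] at main'
  refine main'.congr fun h => ?_
  show g h / h ^ (13+1) = _
  simp only [hgdef]
  rw [one_div_mul_eq_div]
end

section
/- For every v ∈ (0, π), the phase-fitted method PF-D0 integrates the complex exponential exactly: ∑_{j=0}^{12} (a_j + v²·B_j(v))·exp(i·j·v) = 0, where B_0 = B_12 = 0, B_1 = B_11 = b1(v), B_2 = B_10 = b2(v), B_3 = B_9 = b3(v), B_4 = B_8 = b4(v), B_5 = B_7 = b5(v), B_6 = b6(v). -/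
open Finset

/-- The variable coefficient `b₁(v)` of the phase-fitted method PF-D0. -/
noncomputable def pfb1 (v : ℝ) : ℝ :=
  (((-124184636) * Real.cos v + 70378348 * Real.cos (2 * v) - 24862148 * Real.cos (3 * v)
        + 5153611 * Real.cos (4 * v)) * v ^ 2
      + 25 * (3013169 * v ^ 2 - 16128 * Real.cos (3 * v) + 32256 * Real.cos (4 * v)
        - 32256 * Real.cos (5 * v) + 16128 * Real.cos (6 * v)))
    / (206438400 * v ^ 2 * (Real.sin (v / 2)) ^ 10)

/-- The variable coefficient `b₂(v)` of the phase-fitted method PF-D0. -/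
noncomputable def pfb2 (v : ℝ) : ℝ :=
  (v ^ 2 * (159588050 * Real.cos v - 85350160 * Real.cos (2 * v)
        + 16708985 * Real.cos (3 * v) - 5153611 * Real.cos (5 * v))
      - 16 * (6496079 * v ^ 2 - 252000 * Real.cos (3 * v) + 504000 * Real.cos (4 * v)
        - 504000 * Real.cos (5 * v) + 252000 * Real.cos (6 * v)))
    / (206438400 * v ^ 2 * (Real.sin (v / 2)) ^ 10)

/-- The variable coefficient `b₃(v)` of the phase-fitted method PF-D0. -/
noncomputable def pfb3 (v : ℝ) : ℝ :=
  (((-367257540) * Real.cos v + 183567900 * Real.cos (2 * v)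
        - 16708985 * Real.cos (4 * v) + 24862148 * Real.cos (5 * v)) * v ^ 2
      + 81 * (3175117 * v ^ 2 - 224000 * Real.cos (3 * v) + 448000 * Real.cos (4 * v)
        - 448000 * Real.cos (5 * v) + 224000 * Real.cos (6 * v)))
    / (206438400 * v ^ 2 * (Real.sin (v / 2)) ^ 10)

/-- The variable coefficient `b₄(v)` of the phase-fitted method PF-D0. -/
noncomputable def pfb4 (v : ℝ) : ℝ :=
  (30675810 * v ^ 2 * Real.cos v - 42958788 * v ^ 2
      + 75 * (161280 - 611893 * v ^ 2) * Real.cos (3 * v)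
      + 140 * (152411 * v ^ 2 - 172800) * Real.cos (4 * v)
      + (24192000 - 17594587 * v ^ 2) * Real.cos (5 * v)
      - 12096000 * Real.cos (6 * v))
    / (51609600 * v ^ 2 * (Real.sin (v / 2)) ^ 10)

/-- The variable coefficient `b₅(v)` of the phase-fitted method PF-D0. -/
noncomputable def pfb5 (v : ℝ) : ℝ :=
  ((-61351620) * v ^ 2 * Real.cos (2 * v) + 85936557 * v ^ 2
      + 30 * (6120959 * v ^ 2 - 1411200) * Real.cos (3 * v)
      + 25 * (3386880 - 3191761 * v ^ 2) * Real.cos (4 * v)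
      + (62092318 * v ^ 2 - 84672000) * Real.cos (5 * v)
      + 42336000 * Real.cos (6 * v))
    / (103219200 * v ^ 2 * (Real.sin (v / 2)) ^ 10)

/-- The variable coefficient `b₆(v)` of the phase-fitted method PF-D0. -/
noncomputable def pfb6 (v : ℝ) : ℝ :=
  (((-171873114) * Real.cos v + 171835152 * Real.cos (2 * v)
        - 257184477 * Real.cos (3 * v) + 103937264 * Real.cos (4 * v)
        - 75329225 * Real.cos (5 * v)) * v ^ 2
      + 50803200 * (Real.cos (3 * v) - 2 * Real.cos (4 * v)
        + 2 * Real.cos (5 * v) - Real.cos (6 * v)))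
    / (103219200 * v ^ 2 * (Real.sin (v / 2)) ^ 10)

/-- The symmetric arrangement of the PF-D0 variable coefficients:
`B_0 = B_12 = 0`, `B_1 = B_11 = b₁`, ..., `B_6 = b₆`. -/
noncomputable def pfB : ℕ → ℝ → ℝ
  | 1, v => pfb1 v
  | 2, v => pfb2 v
  | 3, v => pfb3 v
  | 4, v => pfb4 v
  | 5, v => pfb5 v
  | 6, v => pfb6 v
  | 7, v => pfb5 v
  | 8, v => pfb4 v
  | 9, v => pfb3 v
  | 10, v => pfb2 v
  | 11, v => pfb1 v
  | _, _ => 0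

/-!
The coefficients `c_j = a_j + v² B_j(v)` of the characteristic polynomial are real and symmetric,
`c_{12-j} = c_j`, so on the unit circle the terms `j` and `12 - j` pair up: the sum equals
`exp(6iv) · ∑ c_j cos((j-6)v)`, the imaginary parts cancelling in pairs. That real sum is the
phase lag of the method. Writing `cos kv` as a Chebyshev polynomial in `cos v = 1 - 2 sin²(v/2)`
and clearing the denominator `v² sin¹⁰(v/2)` of the `b_i` turns its vanishing into a polynomial
identity in `v` and `sin(v/2)`.
-/

open Real

theorem sum_mul_sin_eq_zero_of_symmetric (m : ℕ) (c : ℕ → ℝ)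
    (hc : ∀ j ≤ 2 * m, c (2 * m - j) = c j) (v : ℝ) :
    ∑ j ∈ range (2 * m + 1), c j * sin ((j - m : ℝ) * v) = 0 := by
  have hreflect := sum_range_reflect (fun j => c j * sin ((j - m : ℝ) * v)) (2 * m + 1)
  have hterm : ∀ j ∈ range (2 * m + 1),
      c (2 * m + 1 - 1 - j) * sin (((2 * m + 1 - 1 - j : ℕ) - m : ℝ) * v)
        = -(c j * sin ((j - m : ℝ) * v)) := by
    intro j hj
    have hj : j ≤ 2 * m := Nat.lt_succ_iff.mp (mem_range.mp hj)
    rw [Nat.add_sub_cancel, hc j hj, Nat.cast_sub hj,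
      show ((2 * m : ℕ) - j - m : ℝ) = -(j - m) by push_cast; ring, neg_mul, sin_neg, mul_neg]
  rw [sum_congr rfl hterm, sum_neg_distrib] at hreflect
  linarith

theorem sum_mul_exp_of_symmetric (m : ℕ) (c : ℕ → ℝ)
    (hc : ∀ j ≤ 2 * m, c (2 * m - j) = c j) (v : ℝ) :
    ∑ j ∈ range (2 * m + 1), (c j : ℂ) * Complex.exp (Complex.I * j * v) =
      Complex.exp (Complex.I * m * v) *
        (∑ j ∈ range (2 * m + 1), c j * cos ((j - m : ℝ) * v) : ℝ) := by
  have hterm : ∀ j ∈ range (2 * m + 1), (c j : ℂ) * Complex.exp (Complex.I * j * v) =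
      Complex.exp (Complex.I * m * v) *
        ((c j * cos ((j - m : ℝ) * v) : ℝ) + Complex.I * (c j * sin ((j - m : ℝ) * v) : ℝ)) := by
    intro j _
    rw [show Complex.I * j * v = Complex.I * m * v + ((j - m : ℝ) * v : ℝ) * Complex.I by
      push_cast; ring, Complex.exp_add, Complex.exp_mul_I, ← Complex.ofReal_cos,
      ← Complex.ofReal_sin]
    push_cast
    ring
  rw [sum_congr rfl hterm, ← mul_sum, sum_add_distrib, ← mul_sum, ← Complex.ofReal_sum,
    ← Complex.ofReal_sum, sum_mul_sin_eq_zero_of_symmetric m c hc v]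
  simp

theorem cos_nat_add_two_mul (n : ℕ) (x : ℝ) :
    cos ((n + 2 : ℕ) * x) = 2 * cos x * cos ((n + 1 : ℕ) * x) - cos (n * x) := by
  have h := cos_add_cos ((n + 2 : ℕ) * x) (n * x)
  push_cast at h ⊢
  rw [show ((n + 2) * x + n * x) / 2 = (n + 1) * x by ring,
    show ((n + 2) * x - n * x) / 2 = x by ring] at h
  linarith

theorem pfd0_phase_lag_eq_zero {v : ℝ} (hv : v ≠ 0) (hs : sin (v / 2) ≠ 0) :
    v ^ 2 * (pfb6 v + 2 * (pfb5 v * cos v + pfb4 v * cos (2 * v) + pfb3 v * cos (3 * v)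
      + pfb2 v * cos (4 * v) + pfb1 v * cos (5 * v)))
      + 2 * (cos (6 * v) - 2 * cos (5 * v) + 2 * cos (4 * v) - cos (3 * v)) = 0 := by
  have h2 := cos_nat_add_two_mul 0 v
  have h3 := cos_nat_add_two_mul 1 v
  have h4 := cos_nat_add_two_mul 2 v
  have h5 := cos_nat_add_two_mul 3 v
  have h6 := cos_nat_add_two_mul 4 v
  norm_num at h2 h3 h4 h5 h6
  have hcos : cos v = 1 - 2 * sin (v / 2) ^ 2 := by
    have h := sin_sq_eq_half_sub (v / 2)
    rw [show 2 * (v / 2) = v by ring] at h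
    linarith
  simp only [pfb1, pfb2, pfb3, pfb4, pfb5, pfb6]
  rw [h6, h5, h4, h3, h2, hcos]
  field_simp
  ring

noncomputable def pfd0Coeff (v : ℝ) (j : ℕ) : ℝ := qtA j + v ^ 2 * pfB j v

theorem pfd0Coeff_symmetric (v : ℝ) :
    ∀ j ≤ 2 * 6, pfd0Coeff v (2 * 6 - j) = pfd0Coeff v j := by
  intro j hj
  interval_cases j <;> rfl

theorem sum_pfd0Coeff_mul_cos_eq_zero {v : ℝ} (hv : v ≠ 0) (hs : sin (v / 2) ≠ 0) :
    ∑ j ∈ range (2 * 6 + 1), pfd0Coeff v j * cos ((j - 6 : ℝ) * v) = 0 := by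
  simp only [sum_range_succ, sum_range_zero, pfd0Coeff, qtA, pfB]
  norm_num
  linear_combination pfd0_phase_lag_eq_zero hv hs

/-- The phase-fitted method PF-D0 integrates the complex exponential
`exp(i·v·x)` exactly: `z = exp(i·v)` is a root of its characteristic polynomial. -/
theorem pfd0_integrates_exponential_exactly :
    ∀ v ∈ Set.Ioo (0 : ℝ) Real.pi,
      ∑ j ∈ range 13, ((qtA j : ℂ) + (v : ℂ) ^ 2 * (pfB j v : ℂ))
          * Complex.exp (Complex.I * (j : ℂ) * (v : ℂ)) = 0 := by
  rintro v ⟨hv0, hvpi⟩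
  have hs : sin (v / 2) ≠ 0 := (sin_pos_of_pos_of_lt_pi (by linarith) (by linarith)).ne'
  have h := sum_mul_exp_of_symmetric 6 (pfd0Coeff v) (pfd0Coeff_symmetric v) v
  simp only [Nat.cast_ofNat] at h
  rw [sum_pfd0Coeff_mul_cos_eq_zero hv0.ne' hs, Complex.ofReal_zero, mul_zero] at h
  push_cast [pfd0Coeff] at h
  exact h
end
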